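/- Let X be a real Banach space and κ an uncountable regular cardinal. Assume that the Lindelöf number of X in its weak topology is less than κ, i.e. every cover of X by weakly open sets has a subcover of cardinality less than κ. Then every strongly dispersed sequence {x_α}_{α<κ} in X is weakly null. -/

import Mathlib

open Cardinal Ordinal Set Pointwise

universe u

noncomputable def closedSpan {X : Type u} [SeminormedAddCommGroup X] [NormedSpace ℝ X]
    (s : Set X) : Submodule ℝ X :=
  (Submodule.span ℝ s).topologicalClosure

def IsDispersed {X : Type u} [SeminormedAddCommGroup X] [NormedSpace ℝ X]
    (x : Ordinal.{u} → X) (lam : Ordinal.{u}) : Prop :=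
  ∀ β < lam,
    (⋂ γ ∈ Set.Iio lam, (closedSpan (x '' {α | γ < α ∧ α < lam}) : Set X)) ⊂
      (closedSpan (x '' {α | β < α ∧ α < lam}) : Set X)

def IsStronglyDispersed {X : Type u} [SeminormedAddCommGroup X] [NormedSpace ℝ X]
    (x : Ordinal.{u} → X) (lam : Ordinal.{u}) : Prop :=
  IsDispersed x lam ∧
    (⋂ β ∈ Set.Iio lam, (closedSpan (x '' {α | β < α ∧ α < lam}) : Set X)) = {0}

def IsWeaklyNull {X : Type u} [SeminormedAddCommGroup X] [NormedSpace ℝ X]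
    (x : Ordinal.{u} → X) (θ : Ordinal.{u}) : Prop :=
  ∀ f : X →L[ℝ] ℝ, ∀ ε > (0:ℝ), ∃ β < θ, ∀ α, β < α → α < θ → |f (x α)| < ε

/-- The Lindelöf number of `X` in its weak topology is `< κ`:
every cover of `X` by weakly open sets has a subcover of cardinality `< κ`. -/
def WeakLindelofNumLT (X : Type u) [NormedAddCommGroup X] [NormedSpace ℝ X]
    (κ : Cardinal.{u}) : Prop :=
  ∀ 𝒰 : Set (Set (WeakSpace ℝ X)), (∀ U ∈ 𝒰, IsOpen U) → ⋃₀ 𝒰 = Set.univ →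
    ∃ 𝒱 ⊆ 𝒰, #𝒱 < κ ∧ ⋃₀ 𝒱 = Set.univ

/-! Given `f` and `ε > 0`, the weakly open set `V = {|f| < ε}` and the complements of the tail
spans `Y_β` cover `X`: the `Y_β` are closed and convex, hence weakly closed, and `⋂ Y_β = {0} ⊆ V`.
A subcover of size `< κ` uses `< κ` indices, which by regularity are bounded by some `β₀ < κ`; as
the tails decrease, `Y_β₀ ⊆ V`, and `x_α ∈ Y_β₀` for all `α > β₀`. -/

def LindelofNumLT (T : Type u) [TopologicalSpace T] (κ : Cardinal.{u}) : Prop :=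
  ∀ 𝒰 : Set (Set T), (∀ U ∈ 𝒰, IsOpen U) → ⋃₀ 𝒰 = Set.univ →
    ∃ 𝒱 ⊆ 𝒰, #𝒱 < κ ∧ ⋃₀ 𝒱 = Set.univ

theorem LindelofNumLT.exists_subset_of_biInter_subset {T : Type u} [TopologicalSpace T]
    {κ : Cardinal.{u}} (hL : LindelofNumLT T κ) (hκ : κ.IsRegular) {F : Ordinal.{u} → Set T}
    (hF : ∀ β, IsClosed (F β)) (hF_anti : Antitone F) {V : Set T} (hV : IsOpen V)
    (hFV : ⋂ β ∈ Iio κ.ord, F β ⊆ V) : ∃ β < κ.ord, F β ⊆ V := by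
  have h𝒰_open : ∀ U ∈ insert V ((fun β ↦ (F β)ᶜ) '' Iio κ.ord), IsOpen U := by
    rintro U (rfl | ⟨β, -, rfl⟩)
    exacts [hV, (hF β).isOpen_compl]
  have h𝒰_cover : ⋃₀ insert V ((fun β ↦ (F β)ᶜ) '' Iio κ.ord) = Set.univ := by
    refine eq_univ_of_forall fun z ↦ ?_
    by_cases hz : z ∈ V
    · exact ⟨V, mem_insert _ _, hz⟩
    · obtain ⟨β, hβ, hzβ⟩ : ∃ β ∈ Iio κ.ord, z ∉ F β := by
        by_contra! h
        exact hz (hFV (mem_iInter₂.2 h))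
      exact ⟨(F β)ᶜ, mem_insert_of_mem _ ⟨β, hβ, rfl⟩, hzβ⟩
  obtain ⟨𝒱, h𝒱𝒰, h𝒱κ, h𝒱⟩ := hL _ h𝒰_open h𝒰_cover
  have h_index : ∀ W : 𝒱, ∃ β < κ.ord, (W : Set T) = V ∨ (W : Set T) = (F β)ᶜ := by
    rintro ⟨W, hW⟩
    rcases h𝒱𝒰 hW with rfl | ⟨β, hβ, rfl⟩
    exacts [⟨0, hκ.ord_pos, Or.inl rfl⟩, ⟨β, hβ, Or.inr rfl⟩]
  choose g hgκ hgW using h_index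
  refine ⟨⨆ W, g W, Ordinal.iSup_lt_of_lt_cof (by rwa [hκ.cof_ord]) hgκ, fun z hz ↦ ?_⟩
  obtain ⟨W, hW, hzW⟩ : z ∈ ⋃₀ 𝒱 := h𝒱 ▸ mem_univ z
  rcases hgW ⟨W, hW⟩ with hWV | hWF
  · exact hWV ▸ hzW
  · have hzF : z ∈ (F (g ⟨W, hW⟩))ᶜ := hWF ▸ hzW
    exact (hzF (hF_anti (Ordinal.le_iSup g ⟨W, hW⟩) hz)).elim

section WeakTopology

variable {X : Type u} [NormedAddCommGroup X] [NormedSpace ℝ X]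

theorem Convex.isClosed_preimage_toWeakSpace_symm {s : Set X} (hs : Convex ℝ s)
    (hs_closed : IsClosed s) : IsClosed ((toWeakSpace ℝ X).symm ⁻¹' s) := by
  rw [← LinearEquiv.image_eq_preimage_symm, ← closure_eq_iff_isClosed,
    ← hs.toWeakSpace_closure ℝ, hs_closed.closure_eq]

theorem isOpen_abs_toWeakSpace_lt (f : X →L[ℝ] ℝ) (ε : ℝ) :
    IsOpen {z : WeakSpace ℝ X | |f ((toWeakSpace ℝ X).symm z)| < ε} :=
  isOpen_lt (WeakBilin.eval_continuous (topDualPairing ℝ X).flip f).abs continuous_const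

end WeakTopology

section Tails

variable {X : Type u} [SeminormedAddCommGroup X] [NormedSpace ℝ X]

theorem isClosed_closedSpan (s : Set X) : IsClosed (closedSpan s : Set X) :=
  Submodule.isClosed_topologicalClosure _

theorem subset_closedSpan (s : Set X) : s ⊆ closedSpan s :=
  Submodule.subset_span.trans (Submodule.le_topologicalClosure _)

theorem closedSpan_mono {s t : Set X} (h : s ⊆ t) : closedSpan s ≤ closedSpan t :=
  Submodule.topologicalClosure_mono (Submodule.span_mono h)

theorem antitone_closedSpan_tail (x : Ordinal.{u} → X) (lam : Ordinal.{u}) :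
    Antitone fun β ↦ closedSpan (x '' {α | β < α ∧ α < lam}) :=
  fun _ _ hβ ↦ closedSpan_mono (image_mono fun _ hα ↦ ⟨hβ.trans_lt hα.1, hα.2⟩)

theorem mem_closedSpan_tail (x : Ordinal.{u} → X) {α β lam : Ordinal.{u}} (hβα : β < α)
    (hα : α < lam) : x α ∈ closedSpan (x '' {α | β < α ∧ α < lam}) :=
  subset_closedSpan _ ⟨α, ⟨hβα, hα⟩, rfl⟩

end Tails

theorem stmt7_general {X : Type u} [NormedAddCommGroup X] [NormedSpace ℝ X]
    (κ : Cardinal.{u}) (hreg : κ.IsRegular)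
    (hLind : WeakLindelofNumLT X κ)
    (x : Ordinal.{u} → X) (hsd : IsStronglyDispersed x κ.ord) :
    IsWeaklyNull x κ.ord := by
  intro f ε hε
  let Y : Ordinal.{u} → Set (WeakSpace ℝ X) := fun β ↦
    (toWeakSpace ℝ X).symm ⁻¹' closedSpan (x '' {α | β < α ∧ α < κ.ord})
  have hY_closed (β : Ordinal.{u}) : IsClosed (Y β) :=
    (Submodule.convex _).isClosed_preimage_toWeakSpace_symm (isClosed_closedSpan _)
  have hY_anti : Antitone Y := fun _ _ hβ ↦ preimage_mono (antitone_closedSpan_tail x κ.ord hβ)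
  have hY_inter : ⋂ β ∈ Iio κ.ord, Y β ⊆ {z | |f ((toWeakSpace ℝ X).symm z)| < ε} := by
    intro z hz
    have hz0 : (toWeakSpace ℝ X).symm z ∈ ⋂ β ∈ Iio κ.ord,
        (closedSpan (x '' {α | β < α ∧ α < κ.ord}) : Set X) := hz
    rw [hsd.2, mem_singleton_iff] at hz0
    simpa [hz0] using hε
  have hL : LindelofNumLT (WeakSpace ℝ X) κ := hLind
  obtain ⟨β, hβ, hYβ⟩ := hL.exists_subset_of_biInter_subset hreg hY_closed hY_anti
    (isOpen_abs_toWeakSpace_lt f ε) hY_inter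
  refine ⟨β, hβ, fun α hβα hα ↦ ?_⟩
  have hxα : toWeakSpace ℝ X (x α) ∈ Y β := by simpa [Y] using mem_closedSpan_tail x hβα hα
  simpa using hYβ hxα

theorem stmt7 {X : Type u} [NormedAddCommGroup X] [NormedSpace ℝ X] [CompleteSpace X]
    (κ : Cardinal.{u}) (hreg : κ.IsRegular) (hunc : ℵ₀ < κ)
    (hLind : WeakLindelofNumLT X κ)
    (x : Ordinal.{u} → X) (hsd : IsStronglyDispersed x κ.ord) :
    IsWeaklyNull x κ.ord :=
  stmt7_general κ hreg hLind x hsd
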